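/- Let P = P1 ∪ P2 with P2 potentially using P1. Then for every stable model M of P, the restriction M|_{P2} is a stable model of P2 ∪ facts(M|_{P1} ∩ B_{P2}), where B_{P2} is the Herbrand base of P2. -/
import Mathlib


/-- A propositional logic-program rule `head :- pos, not neg`.
`head = none` represents a strong constraint (rule with empty head). -/
structure LPRule where
  head : Option ℕ
  pos : Finset ℕ
  neg : Finset ℕ
deriving DecidableEq

namespace LP

/-- Truth of a rule head w.r.t. an interpretation; an empty head is never true. -/
def headTrue (I : Set ℕ) : Option ℕ → Prop
  | none => False
  | some a => a ∈ I

/-- The body of a rule is true w.r.t. `I`. -/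
def bodyTrue (I : Set ℕ) (r : LPRule) : Prop :=
  (∀ b ∈ r.pos, b ∈ I) ∧ (∀ b ∈ r.neg, b ∉ I)

/-- `I` satisfies rule `r`. -/
def satRule (I : Set ℕ) (r : LPRule) : Prop := bodyTrue I r → headTrue I r.head

/-- `I` is a model of the program `P`. -/
def isModel (P : Set LPRule) (I : Set ℕ) : Prop := ∀ r ∈ P, satRule I r

/-- A positive (negation-free) program. -/
def isPositive (P : Set LPRule) : Prop := ∀ r ∈ P, r.neg = ∅

/-- A constraint-free program (no rules with empty head). -/
def constraintFree (P : Set LPRule) : Prop := ∀ r ∈ P, r.head ≠ none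

/-- The Gelfond-Lifschitz reduct `P^I`. -/
def reduct (P : Set LPRule) (I : Set ℕ) : Set LPRule :=
  (fun r => LPRule.mk r.head r.pos ∅) '' {r ∈ P | ∀ b ∈ r.neg, b ∉ I}

/-- `M` is the least model of `P`. -/
def isLeastModel (P : Set LPRule) (M : Set ℕ) : Prop :=
  isModel P M ∧ ∀ M', isModel P M' → M ⊆ M'

/-- `M` is a stable model of `P`: it is the least model of the reduct `P^M`. -/
def isStable (P : Set LPRule) (M : Set ℕ) : Prop := isLeastModel (reduct P M) M

/-- `facts S` is the set of facts `{p :- | p ∈ S}`. -/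
def facts (S : Set ℕ) : Set LPRule := (fun p => LPRule.mk (some p) ∅ ∅) '' S

/-- The atoms occurring in a rule. -/
def ruleAtoms (r : LPRule) : Set ℕ := {a | r.head = some a} ∪ ↑r.pos ∪ ↑r.neg

/-- The Herbrand base of a program: all atoms occurring in it. -/
def atoms (P : Set LPRule) : Set ℕ := ⋃ r ∈ P, ruleAtoms r

/-- `p` depends on `q`: some rule has head `p` and `q` in its body. -/
def dependsOn (P : Set LPRule) (p q : ℕ) : Prop :=
  ∃ r ∈ P, r.head = some p ∧ (q ∈ r.pos ∨ q ∈ r.neg)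

/-- `P` is stratified: no rule with head `p` and `not q` in the body where
`q` transitively depends on `p`. -/
def stratified (P : Set LPRule) : Prop :=
  ∀ r ∈ P, ∀ p, r.head = some p → ∀ q ∈ r.neg, ¬ Relation.TransGen (dependsOn P) q p

/-- Hypotheses `H` do not occur in rule heads of `P`. -/
def hypFree (P : Set LPRule) (H : Finset ℕ) : Prop :=
  ∀ r ∈ P, ∀ h ∈ H, r.head ≠ some h

/-- `S` is an admissible solution: `S ⊆ H` and some stable model of
`P ∪ facts S` makes all observations true. -/
def admissible (P : Set LPRule) (H obsP obsN : Finset ℕ) (S : Set ℕ) : Prop :=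
  S ⊆ ↑H ∧ ∃ M, isStable (P ∪ facts S) M ∧ (∀ o ∈ obsP, o ∈ M) ∧ (∀ o ∈ obsN, o ∉ M)

/-- `sum_γ`: total penalty of the hypotheses of `H` belonging to `S`. -/
noncomputable def cost (γ : ℕ → NNReal) (H : Finset ℕ) (S : Set ℕ) : NNReal :=
  ∑ h ∈ H, S.indicator γ h

/-- `S` is an optimal solution: admissible with minimal total penalty. -/
def optimal (P : Set LPRule) (H obsP obsN : Finset ℕ) (γ : ℕ → NNReal) (S : Set ℕ) : Prop :=
  admissible P H obsP obsN S ∧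
  ∀ S', admissible P H obsP obsN S' → cost γ H S ≤ cost γ H S'

end LP

namespace LP

/-- `P2` potentially uses `P1`: no head atom of `P2` occurs in `P1`. -/
def potentiallyUses (P2 P1 : Set LPRule) : Prop :=
  ∀ r ∈ P2, ∀ a, r.head = some a → a ∉ atoms P1

/-- The translated program `lpw(𝒫)`: the original program `P`, the guessing rules
`h :- sol h`, `sol h :- not nsol h`, `nsol h :- not sol h` for each hypothesis `h ∈ H`,
and the strong constraints `:- not a` (resp. `:- a`) for positive (resp. negative)
observations. -/
def lpw (P : Set LPRule) (H obsP obsN : Finset ℕ) (sol nsol : ℕ → ℕ) : Set LPRule :=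
  P ∪ (⋃ h ∈ (↑H : Set ℕ),
        {LPRule.mk (some h) {sol h} ∅,
         LPRule.mk (some (sol h)) ∅ {nsol h},
         LPRule.mk (some (nsol h)) ∅ {sol h}})
    ∪ ((fun a => LPRule.mk none ∅ {a}) '' ↑obsP)
    ∪ ((fun a => LPRule.mk none {a} ∅) '' ↑obsN)

/-- The atoms `sol h` and `nsol h` are pairwise distinct fresh atoms not occurring
in `P`, `H`, or among the observations. -/
def freshAtoms (P : Set LPRule) (H obsP obsN : Finset ℕ) (sol nsol : ℕ → ℕ) : Prop :=
  Function.Injective sol ∧ Function.Injective nsol ∧ (∀ h h', sol h ≠ nsol h') ∧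
  ∀ h ∈ H, sol h ∉ atoms P ∪ ↑H ∪ ↑obsP ∪ ↑obsN ∧
           nsol h ∉ atoms P ∪ ↑H ∪ ↑obsP ∪ ↑obsN

/-- The total weak-constraint penalty of a model `M`: the weak constraint `:~ h [γ(h)]`
is violated by `M` iff `h ∈ M`, so the penalty is the sum of `γ(h)` over `h ∈ H ∩ M`. -/
noncomputable def penalty (γ : ℕ → NNReal) (H : Finset ℕ) (M : Set ℕ) : NNReal :=
  cost γ H M

/-- `M` is a best model of the translated program: a stable model (which in particular
satisfies all strong constraints) minimizing the total weight of violated weak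
constraints. -/
def isBest (P : Set LPRule) (H obsP obsN : Finset ℕ) (γ : ℕ → NNReal)
    (sol nsol : ℕ → ℕ) (M : Set ℕ) : Prop :=
  isStable (lpw P H obsP obsN sol nsol) M ∧
  ∀ M', isStable (lpw P H obsP obsN sol nsol) M' → penalty γ H M ≤ penalty γ H M'

end LP

namespace LP

lemma head_mem_atoms {P : Set LPRule} {r : LPRule} {a : ℕ}
    (hr : r ∈ P) (h : r.head = some a) : a ∈ atoms P := by
  simp only [atoms, Set.mem_iUnion]
  exact ⟨r, hr, Or.inl (Or.inl h)⟩

lemma pos_mem_atoms {P : Set LPRule} {r : LPRule} {b : ℕ}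
    (hr : r ∈ P) (h : b ∈ r.pos) : b ∈ atoms P := by
  simp only [atoms, Set.mem_iUnion]
  exact ⟨r, hr, Or.inl (Or.inr h)⟩

lemma neg_mem_atoms {P : Set LPRule} {r : LPRule} {b : ℕ}
    (hr : r ∈ P) (h : b ∈ r.neg) : b ∈ atoms P := by
  simp only [atoms, Set.mem_iUnion]
  exact ⟨r, hr, Or.inr h⟩

end LP


/-- if `P2` potentially uses `P1`, then for any stable model `M` of
`P1 ∪ P2`, the restriction `M|_{P2}` is a stable model of
`P2 ∪ facts(M|_{P1} ∩ B_{P2})`. -/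
theorem splitting_lemma (P1 P2 : Set LPRule)
    (hFin1 : P1.Finite) (hFin2 : P2.Finite)
    (hPU : LP.potentiallyUses P2 P1) :
    ∀ M, LP.isStable (P1 ∪ P2) M →
      LP.isStable (P2 ∪ LP.facts ((M ∩ LP.atoms P1) ∩ LP.atoms P2))
        (M ∩ LP.atoms P2) := by
  intro M hM
  obtain ⟨hMmod, hMmin⟩ := hM
  set S : Set ℕ := (M ∩ LP.atoms P1) ∩ LP.atoms P2 with hS
  set M2 : Set ℕ := M ∩ LP.atoms P2 with hM2def
  have hM2sub : M2 ⊆ M := Set.inter_subset_left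
  constructor
  · -- M2 is a model of the reduct
    rintro r ⟨r0, ⟨hmem, hneg⟩, rfl⟩
    rcases hmem with hmem | hmem
    · -- r0 ∈ P2
      rintro ⟨hpos, -⟩
      -- the corresponding rule is in reduct (P1 ∪ P2) M
      have hnegM : ∀ b ∈ r0.neg, b ∉ M := by
        intro b hb hbM
        exact hneg b hb ⟨hbM, LP.neg_mem_atoms hmem hb⟩
      have hrr : (LPRule.mk r0.head r0.pos ∅) ∈ LP.reduct (P1 ∪ P2) M :=
        ⟨r0, ⟨Or.inr hmem, hnegM⟩, rfl⟩
      have hbody : LP.bodyTrue M (LPRule.mk r0.head r0.pos ∅) := by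
        refine ⟨fun b hb => hM2sub (hpos b hb), by simp⟩
      have hhead := hMmod _ hrr hbody
      cases h : r0.head with
      | none => rw [h] at hhead; exact hhead.elim
      | some a =>
        rw [h] at hhead
        exact ⟨hhead, LP.head_mem_atoms hmem h⟩
    · -- r0 ∈ facts S
      obtain ⟨p, hp, rfl⟩ := hmem
      intro _
      exact ⟨hp.1.1, hp.2⟩
  · -- minimality
    intro N hN
    set N0 : Set ℕ := (N ∩ M ∩ LP.atoms P2) ∪ (M \ LP.atoms P2) with hN0def
    have hN0subM : N0 ⊆ M := by
      rintro x (⟨⟨-, hx⟩, -⟩ | ⟨hx, -⟩) <;> exact hx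
    have hfactsN : S ⊆ N := by
      intro p hp
      have hfr : (LPRule.mk (some p) ∅ ∅) ∈
          LP.reduct (P2 ∪ LP.facts S) M2 :=
        ⟨LPRule.mk (some p) ∅ ∅, ⟨Or.inr ⟨p, hp, rfl⟩, by simp⟩, rfl⟩
      exact hN _ hfr ⟨by simp, by simp⟩
    have hN0mod : LP.isModel (LP.reduct (P1 ∪ P2) M) N0 := by
      rintro r ⟨r0, ⟨hmem, hnegM⟩, rfl⟩
      rintro ⟨hpos, -⟩
      have hposM : ∀ b ∈ r0.pos, b ∈ M := fun b hb => hN0subM (hpos b hb)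
      have hbodyM : LP.bodyTrue M (LPRule.mk r0.head r0.pos ∅) := ⟨hposM, by simp⟩
      have hheadM := hMmod _ ⟨r0, ⟨hmem, hnegM⟩, rfl⟩ hbodyM
      cases h : r0.head with
      | none => rw [h] at hheadM; exact hheadM.elim
      | some a =>
        rw [h] at hheadM
        rcases hmem with hmem | hmem
        · -- r0 ∈ P1
          have ha1 : a ∈ LP.atoms P1 := LP.head_mem_atoms hmem h
          by_cases ha2 : a ∈ LP.atoms P2
          · have haN : a ∈ N := hfactsN ⟨⟨hheadM, ha1⟩, ha2⟩
            exact Or.inl ⟨⟨haN, hheadM⟩, ha2⟩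
          · exact Or.inr ⟨hheadM, ha2⟩
        · -- r0 ∈ P2
          have ha2 : a ∈ LP.atoms P2 := LP.head_mem_atoms hmem h
          have hnegM2 : ∀ b ∈ r0.neg, b ∉ M2 := fun b hb hbM2 =>
            hnegM b hb (hM2sub hbM2)
          have hrr : (LPRule.mk r0.head r0.pos ∅) ∈
              LP.reduct (P2 ∪ LP.facts S) M2 :=
            ⟨r0, ⟨Or.inl hmem, hnegM2⟩, rfl⟩
          have hposN : ∀ b ∈ r0.pos, b ∈ N := by
            intro b hb
            have hb2 : b ∈ LP.atoms P2 := LP.pos_mem_atoms hmem hb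
            rcases hpos b hb with ⟨⟨hbN, -⟩, -⟩ | ⟨-, hb2'⟩
            · exact hbN
            · exact absurd hb2 hb2'
          have hheadN := hN _ hrr ⟨hposN, by simp⟩
          rw [h] at hheadN
          exact Or.inl ⟨⟨hheadN, hheadM⟩, ha2⟩
    have hMN0 : M ⊆ N0 := hMmin N0 hN0mod
    intro x hx
    rcases hMN0 hx.1 with ⟨⟨hxN, -⟩, -⟩ | ⟨-, hx2⟩
    · exact hxN
    · exact absurd hx.2 hx2
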